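/- For distinct i < j < k ≤ n, the three elements \widetilde{w}_{ijk}(\widetilde{φ}(b_{ij})), \widetilde{w}_{ijk}(\widetilde{φ}(b_{ik})), \widetilde{w}_{ijk}(\widetilde{φ}(b_{jk})) of F_{n+1}^3 are pairwise distinct, and none of them is the identity. -/

import Mathlib

/-- Index type for the generators `a_{ijk}` of `G_n^3`: 3-element subsets of `Fin n`. -/
abbrev TripleIndex (n : ℕ) := {s : Finset (Fin n) // s.card = 3}

/-- Index type for the generators `b_{ij}` (with `i < j`) of the pure braid group. -/
abbrev PBGen (n : ℕ) := {p : Fin n × Fin n // p.1 < p.2}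

/-- Index type for the generators `σ_{ij}` (ordered pairs of distinct indices). -/
abbrev SGen (n : ℕ) := {p : Fin n × Fin n // p.1 ≠ p.2}

/-- Generators of the group `\widetilde{G}_n^3`. -/
abbrev TGen (n : ℕ) := TripleIndex n ⊕ SGen n

/-- `a_{ijk}` interpreted via `f`, equal to `1` when `i,j,k` are not pairwise distinct. -/
def atri {n : ℕ} {G : Type*} [Group G] (f : TripleIndex n → G) (i j k : Fin n) : G :=
  if h : ({i, j, k} : Finset (Fin n)).card = 3 then f ⟨{i, j, k}, h⟩ else 1

/-- `σ_{ij}` interpreted via `f`, equal to `1` when `i = j`. -/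
def sgen {n : ℕ} {G : Type*} [Group G] (f : SGen n → G) (i j : Fin n) : G :=
  if h : i ≠ j then f ⟨(i, j), h⟩ else 1

/-- `b_{ij}` interpreted via `f`, equal to `1` unless `i < j`. -/
def bgen {n : ℕ} {G : Type*} [Group G] (f : PBGen n → G) (i j : Fin n) : G :=
  if h : i < j then f ⟨(i, j), h⟩ else 1

/-- The letter `b_{ij}` in the free group on the pure braid generators. -/
def pbB {n : ℕ} (i j : Fin n) : FreeGroup (PBGen n) := bgen FreeGroup.of i j

/-- The letter `a_{ijk}` in the free group on the generators of `G_n^3`. -/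
def frA {n : ℕ} (i j k : Fin n) : FreeGroup (TripleIndex n) := atri FreeGroup.of i j k

/-- The letter `a_{ijk}` in the free group on the generators of `\widetilde{G}_n^3`. -/
def tA {n : ℕ} (i j k : Fin n) : FreeGroup (TGen n) :=
  atri (fun t => FreeGroup.of (Sum.inl t)) i j k

/-- The letter `σ_{ij}` in the free group on the generators of `\widetilde{G}_n^3`. -/
def tS {n : ℕ} (i j : Fin n) : FreeGroup (TGen n) :=
  sgen (fun p => FreeGroup.of (Sum.inr p)) i j

/-- The defining relators of the pure braid group `PB_n`
(Cohen–Falk–Randell presentation), written as relators `LHS * RHS⁻¹`. -/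
def PBRels (n : ℕ) : Set (FreeGroup (PBGen n)) :=
  { x | ∃ i j r s : Fin n, i < j ∧ r < s ∧
      (((s < i ∨ j < r) ∧
          x = pbB r s * pbB i j * (pbB r s)⁻¹ * (pbB i j)⁻¹) ∨
        ((j = r) ∧
          x = pbB r s * pbB i j * (pbB r s)⁻¹ * ((pbB i s)⁻¹ * pbB i j * pbB i s)⁻¹) ∨
        ((i < r ∧ j = s) ∧
          x = pbB r s * pbB i j * (pbB r s)⁻¹ *
            ((pbB i j)⁻¹ * (pbB i r)⁻¹ * pbB i j * pbB i r * pbB i j)⁻¹) ∨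
        ((i < r ∧ r < j ∧ j < s) ∧
          x = pbB r s * pbB i j * (pbB r s)⁻¹ *
            ((pbB i s)⁻¹ * (pbB i r)⁻¹ * pbB i s * pbB i r * pbB i j *
              (pbB i r)⁻¹ * (pbB i s)⁻¹ * pbB i r * pbB i s)⁻¹)) }

/-- The pure braid group on `n` strands, via its standard presentation. -/
abbrev PBn (n : ℕ) := PresentedGroup (PBRels n)

/-- The defining relators of `G_n^3`. -/
def Gn3Rels (n : ℕ) : Set (FreeGroup (TripleIndex n)) :=
  { x | (∃ t : TripleIndex n, x = FreeGroup.of t * FreeGroup.of t) ∨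
      (∃ t u : TripleIndex n, (t.1 ∩ u.1).card ≤ 1 ∧
        x = FreeGroup.of t * FreeGroup.of u * (FreeGroup.of u * FreeGroup.of t)⁻¹) ∨
      (∃ i j k l : Fin n, [i, j, k, l].Nodup ∧
        x = frA i j k * frA i j l * frA i k l * frA j k l *
          (frA j k l * frA i k l * frA i j l * frA i j k)⁻¹) }

/-- The group `G_n^3`. -/
abbrev Gn3 (n : ℕ) := PresentedGroup (Gn3Rels n)

/-- The defining relators of `\widetilde{G}_n^3`, relations (a)–(i). -/
def TGn3Rels (n : ℕ) : Set (FreeGroup (TGen n)) :=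
  { x | (∃ t : TripleIndex n,
          x = FreeGroup.of (Sum.inl t) * FreeGroup.of (Sum.inl t)) ∨
      (∃ t u : TripleIndex n, (t.1 ∩ u.1).card ≤ 1 ∧
          x = FreeGroup.of (Sum.inl t) * FreeGroup.of (Sum.inl u) *
            (FreeGroup.of (Sum.inl u) * FreeGroup.of (Sum.inl t))⁻¹) ∨
      (∃ i j k l : Fin n, [i, j, k, l].Nodup ∧
          x = tA i j k * tA i j l * tA i k l * tA j k l *
            (tA j k l * tA i k l * tA i j l * tA i j k)⁻¹) ∨
      (∃ i j k l : Fin n, [i, j, k, l].Nodup ∧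
          x = tS i j * tS k l * (tS k l * tS i j)⁻¹) ∨
      (∃ (i j : Fin n) (u : TripleIndex n), i ≠ j ∧
          (({i, j} : Finset (Fin n)) ∩ u.1).card ≤ 1 ∧
          x = tS i j * FreeGroup.of (Sum.inl u) *
            (FreeGroup.of (Sum.inl u) * tS i j)⁻¹) ∨
      (∃ i j k : Fin n, [i, j, k].Nodup ∧
          (x = tA i j k * tS i j * tS i k * tS j k *
              (tS j k * tS i k * tS i j * tA i j k)⁻¹ ∨
            x = tS i j * tA i j k * tS i k * tS j k *
              (tS j k * tS i k * tA i j k * tS i j)⁻¹ ∨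
            x = tS i j * tS i k * tA i j k * tS j k *
              (tS j k * tA i j k * tS i k * tS i j)⁻¹ ∨
            x = tS i j * tS i k * tS j k * tA i j k *
              (tA i j k * tS j k * tS i k * tS i j)⁻¹)) }

/-- The group `\widetilde{G}_n^3`. -/
abbrev TGn3 (n : ℕ) := PresentedGroup (TGn3Rels n)

/-- Ordered product of `f l` over all `l > k`, in increasing order of `l`. -/
def listUp {n : ℕ} {G : Type*} [Group G] (f : Fin n → G) (k : Fin n) : G :=
  (((List.finRange n).filter fun l => decide (k < l)).map f).prod

/-- Ordered product of `f l` over all `l < k`, in increasing order of `l`. -/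
def listLow {n : ℕ} {G : Type*} [Group G] (f : Fin n → G) (k : Fin n) : G :=
  (((List.finRange n).filter fun l => decide (l < k)).map f).prod

/-- The word `c_{i,k} = (∏_{l=k+1}^{n} a_{ikl}) (∏_{l=1}^{k-1} a_{ikl})`
(degenerate letters give `1`, so the products effectively omit `l ∈ {i,k}`). -/
def cPhi {n : ℕ} {G : Type*} [Group G] (f : TripleIndex n → G) (i k : Fin n) : G :=
  listUp (fun l => atri f i k l) k * listLow (fun l => atri f i k l) k

/-- The word `φ(b_{ij}) = c_{i,i+1}⁻¹ ⋯ c_{i,j-1}⁻¹ (c_{i,j})² c_{i,j-1} ⋯ c_{i,i+1}`. -/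
def phiWord {n : ℕ} {G : Type*} [Group G] (f : TripleIndex n → G) (i j : Fin n) : G :=
  (((List.finRange n).filter fun m => decide (i < m ∧ m < j)).map
      fun m => (cPhi f i m)⁻¹).prod *
    (cPhi f i j) ^ 2 *
    ((((List.finRange n).filter fun m => decide (i < m ∧ m < j)).map
      fun m => (cPhi f i m)⁻¹).prod)⁻¹

/-- `φ` on the generators of `PB_n`, with values in `G_n^3`. -/
def phiGen {n : ℕ} : PBGen n → Gn3 n :=
  fun p => phiWord PresentedGroup.of p.1.1 p.1.2

/-- The word `(∏_{k=m+1}^{n} a_{imk}) · σ · (∏_{k=1}^{m-1} a_{imk})` for a middle letter `σ`. -/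
def cMid {n : ℕ} {G : Type*} [Group G] (fa : TripleIndex n → G) (σmid : G) (i m : Fin n) : G :=
  listUp (fun k => atri fa i m k) m * σmid * listLow (fun k => atri fa i m k) m

/-- The word `\widetilde{φ}(b_{ij}) = c_{i,i+1}⁻¹ ⋯ c_{i,j-1}⁻¹ \bar c_{i,j} \bar c_{j,i}
c_{i,j-1} ⋯ c_{i,i+1}`, where `c_{i,m}`, `\bar c_{i,m}`, `\bar c_{j,i}` are as in the paper. -/
def tphiWord {n : ℕ} {G : Type*} [Group G] (fa : TripleIndex n → G) (fs : SGen n → G)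
    (i j : Fin n) : G :=
  (((List.finRange n).filter fun m => decide (i < m ∧ m < j)).map
      fun m => (cMid fa (sgen fs i m)⁻¹ i m)⁻¹).prod *
    cMid fa (sgen fs i j) i j * cMid fa (sgen fs j i) i j *
    ((((List.finRange n).filter fun m => decide (i < m ∧ m < j)).map
      fun m => (cMid fa (sgen fs i m)⁻¹ i m)⁻¹).prod)⁻¹

/-- `\widetilde{φ}` on the generators of `PB_n`, with values in `\widetilde{G}_n^3`. -/
def tphiGen {n : ℕ} : PBGen n → TGn3 n :=
  fun p => tphiWord (fun t => PresentedGroup.of (Sum.inl t))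
    (fun q => PresentedGroup.of (Sum.inr q)) p.1.1 p.1.2
/-- Index set for the free product `F_n^3`: functions from `{1,…,n} ∖ {i,j,k}` to `ℤ/2 × ℤ/2`. -/
def Fn3Idx (n : ℕ) (i j k : Fin n) : Type :=
  {l : Fin n // l ≠ i ∧ l ≠ j ∧ l ≠ k} → ZMod 2 × ZMod 2

/-- Relators of `F_n^3`: every generator is an involution. -/
def Fn3Rels (n : ℕ) (i j k : Fin n) : Set (FreeGroup (Fn3Idx n i j k)) :=
  { x | ∃ f : Fn3Idx n i j k, x = FreeGroup.of f * FreeGroup.of f }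

/-- The group `F_n^3`: the free product of copies of `ℤ/2` indexed by `Fn3Idx n i j k`. -/
abbrev Fn3 (n : ℕ) (i j k : Fin n) := PresentedGroup (Fn3Rels n i j k)

/-- The number of occurrences of the letter `a_{xyz}` in a word in the generators of `G_n^3`. -/
def cntA {n : ℕ} (L : List (TripleIndex n)) (x y z : Fin n) : ℕ :=
  L.countP fun t => decide (t.1 = ({x, y, z} : Finset (Fin n)))

/-- The index of an occurrence of `a_{ijk}` whose preceding prefix is `pre`:
`l ↦ (N_{jkl} + N_{ijl}, N_{ikl} + N_{ijl})` in `ℤ/2 × ℤ/2`. -/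
def idxOf {n : ℕ} (i j k : Fin n) (pre : List (TripleIndex n)) : Fn3Idx n i j k :=
  fun l => (((cntA pre j k l.1 + cntA pre i j l.1 : ℕ) : ZMod 2),
            ((cntA pre i k l.1 + cntA pre i j l.1 : ℕ) : ZMod 2))

/-- Auxiliary recursion computing `w_{ijk}` of a word: `pre` is the prefix read so far. -/
def wRec {n : ℕ} (i j k : Fin n) :
    List (TripleIndex n) → List (TripleIndex n) → Fn3 n i j k
  | _, [] => 1
  | pre, t :: rest =>
      (if t.1 = ({i, j, k} : Finset (Fin n)) then
          PresentedGroup.of (idxOf i j k pre) else 1) *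
        wRec i j k (pre ++ [t]) rest

/-- The index-counting map `w_{ijk}` on words in the generators of `G_n^3`. -/
def wWord {n : ℕ} (i j k : Fin n) (L : List (TripleIndex n)) : Fn3 n i j k :=
  wRec i j k [] L

/-- The element of `G_n^3` represented by a word in the generators. -/
def gn3Word {n : ℕ} (L : List (TripleIndex n)) : Gn3 n :=
  (L.map PresentedGroup.of).prod

/-- The inclusion of triples of `{1,…,n}` into triples of `{1,…,n+1}`. -/
def castTriple {n : ℕ} (t : TripleIndex n) : TripleIndex (n + 1) :=
  ⟨t.1.map ⟨Fin.castSucc, Fin.castSucc_injective n⟩, by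
    rw [Finset.card_map]; exact t.2⟩

/-- The triple `{i, j, n+1}` associated with `σ_{ij}`. -/
def sigTriple {n : ℕ} (p : SGen n) : TripleIndex (n + 1) :=
  ⟨{p.1.1.castSucc, p.1.2.castSucc, Fin.last n},
    Finset.card_eq_three.mpr ⟨_, _, _,
      fun h => p.2 (Fin.castSucc_injective n h),
      (Fin.castSucc_lt_last _).ne, (Fin.castSucc_lt_last _).ne, rfl⟩⟩

/-- `π` on the generators of `\widetilde{G}_n^3`: `a_{ijk} ↦ a_{ijk}`, `σ_{ij} ↦ a_{ij(n+1)}`. -/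
def piGen {n : ℕ} : TGen n → Gn3 (n + 1)
  | Sum.inl t => PresentedGroup.of (castTriple t)
  | Sum.inr p => PresentedGroup.of (sigTriple p)


/-!
Read a word in the generators of `G_{n+1}^3` from left to right, keeping track of the last
coordinate `s ∈ (ℤ/2)²` of the index that `w_{ijk}` would give an occurrence of `a_{ijk}` at the
current position. Only the letters `a_{xy(n+1)}` change `s`: by `(1,0)`, `(1,1)`, `(0,1)` for
`{x,y} = {j,k}, {i,j}, {i,k}`. Recording, for each value of `s`, the parity of the generators of
`F_{n+1}^3` with that last coordinate is a homomorphism on `F_{n+1}^3`, and the pair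
(`s`, parity vector) evolves in the lamplighter group `ℤ/2 ≀ (ℤ/2)²`: `a_{ijk}` toggles the lamp
at `s` (`t`), every other letter moves `s` by its shift (`m_δ`). These are involutions, so
`π(\widetilde{φ}(b_{ab}))` can be evaluated in the lamplighter group letter by letter. All letters
but `a_{ijk}` and the `σ`'s on pairs inside `{i,j,k}` act trivially, leaving `(t m₁₁)²` for
`b_{ij}`, `(m₁₀ t)²` for `b_{jk}` and `(t m₁₁)⁻¹ (m₀₁ t)² (t m₁₁)` for `b_{ik}`, whose parity
vectors are supported on `{(0,0),(1,1)}`, `{(0,0),(1,0)}` and `{(1,0),(1,1)}`.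
-/

open Function Equiv

local notation "𝕍" => ZMod 2 × ZMod 2

section Words
variable {n : ℕ} {G : Type*} [Group G]

theorem prod_map_filter_finRange_eq_one (p : Fin n → Bool) (f : Fin n → G)
    (hf : ∀ x, p x → f x = 1) : (((List.finRange n).filter p).map f).prod = 1 :=
  List.prod_eq_one (by simpa using hf)

theorem prod_map_filter_finRange_eq_of_ne_one (p : Fin n → Bool) (f : Fin n → G) (c : Fin n)
    (hf : ∀ x, p x → x ≠ c → f x = 1) :
    (((List.finRange n).filter p).map f).prod = if p c then f c else 1 := by
  rw [List.prod_map_eq_pow_single c f fun x hx hmem => hf x (List.mem_filter.mp hmem).2 hx]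
  split_ifs with hc
  · rw [List.count_filter hc, List.count_finRange, pow_one]
  · rw [List.count_eq_zero.mpr (by simp [hc]), pow_zero]

theorem listUp_eq_of_ne_one (f : Fin n → G) (m c : Fin n)
    (hf : ∀ l, m < l → l ≠ c → f l = 1) : listUp f m = if m < c then f c else 1 := by
  simpa [listUp] using prod_map_filter_finRange_eq_of_ne_one (fun l => decide (m < l)) f c
    (by simpa using hf)

theorem listLow_eq_of_ne_one (f : Fin n → G) (m c : Fin n)
    (hf : ∀ l, l < m → l ≠ c → f l = 1) : listLow f m = if c < m then f c else 1 := by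
  simpa [listLow] using prod_map_filter_finRange_eq_of_ne_one (fun l => decide (l < m)) f c
    (by simpa using hf)

variable {H : Type*} [Group H] (φ : G →* H)

theorem map_atri (f : TripleIndex n → G) (a b c : Fin n) :
    φ (atri f a b c) = atri (φ ∘ f) a b c := by
  unfold atri; split_ifs <;> simp

theorem map_sgen (f : SGen n → G) (a b : Fin n) : φ (sgen f a b) = sgen (φ ∘ f) a b := by
  unfold sgen; split_ifs <;> simp

theorem map_cMid (fa : TripleIndex n → G) (s : G) (a m : Fin n) :
    φ (cMid fa s a m) = cMid (φ ∘ fa) (φ s) a m := by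
  simp only [cMid, listUp, listLow, map_mul, map_list_prod, List.map_map, Function.comp_def,
    map_atri]

theorem map_tphiWord (fa : TripleIndex n → G) (fs : SGen n → G) (a b : Fin n) :
    φ (tphiWord fa fs a b) = tphiWord (φ ∘ fa) (φ ∘ fs) a b := by
  simp only [tphiWord, map_mul, map_inv, map_list_prod, List.map_map, Function.comp_def,
    map_cMid, map_sgen]

end Words

theorem FreeGroup.lift_eq_prod_map_fst_toWord {α G : Type*} [DecidableEq α] [Group G]
    {f : α → G} (hf : ∀ a, (f a)⁻¹ = f a) (x : FreeGroup α) :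
    FreeGroup.lift f x = ((x.toWord.map Prod.fst).map f).prod := by
  conv_lhs => rw [← FreeGroup.mk_toWord (x := x)]
  rw [FreeGroup.lift_mk, List.map_map]
  congr 1
  refine List.map_congr_left fun ⟨a, b⟩ _ => ?_
  cases b <;> simp [hf]

theorem Gn3.of_inv {n : ℕ} (t : TripleIndex n) :
    (PresentedGroup.of t : Gn3 n)⁻¹ = PresentedGroup.of t :=
  inv_eq_of_mul_eq_one_right (PresentedGroup.one_of_mem (Or.inl ⟨t, rfl⟩))

def piTphiFreeWord {n : ℕ} (a b : Fin n) : FreeGroup (TripleIndex (n + 1)) :=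
  tphiWord (FreeGroup.of ∘ castTriple) (FreeGroup.of ∘ sigTriple) a b

theorem pi_tphiGen_eq_gn3Word {n : ℕ} (π : TGn3 n →* Gn3 (n + 1))
    (hπ : ∀ g : TGen n, π (PresentedGroup.of g) = piGen g) (p : PBGen n) :
    π (tphiGen p) = gn3Word ((piTphiFreeWord p.1.1 p.1.2).toWord.map Prod.fst) := by
  rw [gn3Word, ← FreeGroup.lift_eq_prod_map_fst_toWord Gn3.of_inv, piTphiFreeWord, tphiGen,
    map_tphiWord, map_tphiWord]
  congr 1 <;> funext <;> simp [hπ, piGen]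

namespace Lamplighter

def move (δ : 𝕍) : Perm (𝕍 × (𝕍 → ZMod 2)) :=
  Involutive.toPerm (fun s => (s.1 + δ, s.2)) fun s => by
    ext <;> simp [add_assoc, CharTwo.add_self_eq_zero]

def toggle : Perm (𝕍 × (𝕍 → ZMod 2)) :=
  Involutive.toPerm (fun s => (s.1, s.2 + Pi.single s.1 1)) fun s => by
    simp [add_assoc, CharTwo.add_self_eq_zero]

@[simp]
theorem move_apply (δ : 𝕍) (s : 𝕍 × (𝕍 → ZMod 2)) : move δ s = (s.1 + δ, s.2) := rfl

@[simp]
theorem toggle_apply (s : 𝕍 × (𝕍 → ZMod 2)) : toggle s = (s.1, s.2 + Pi.single s.1 1) := rfl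

theorem move_inv (δ : 𝕍) : (move δ)⁻¹ = move δ := Involutive.toPerm_symm _

theorem move_zero : move 0 = 1 := by ext <;> simp

end Lamplighter

section Tally
variable {N : ℕ} {i j k : Fin N} (l : {x : Fin N // x ≠ i ∧ x ≠ j ∧ x ≠ k})
open Lamplighter Multiplicative

def indexTally : Fn3 N i j k →* Multiplicative (𝕍 → ZMod 2) :=
  PresentedGroup.toGroup (f := fun f => ofAdd (Pi.single (f l) 1)) <| by
    rintro _ ⟨f, rfl⟩
    simp [← ofAdd_add, CharTwo.add_self_eq_zero]

theorem indexTally_of (f : Fn3Idx N i j k) :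
    indexTally l (PresentedGroup.of f) = ofAdd (Pi.single (f l) 1) :=
  PresentedGroup.toGroup.of _

theorem idxOf_nil_apply : idxOf i j k [] l = 0 := by
  simp [idxOf, cntA]

theorem idxOf_append_apply (p q : List (TripleIndex N)) :
    idxOf i j k (p ++ q) l = idxOf i j k p l + idxOf i j k q l := by
  simp only [idxOf, cntA, List.countP_append, Prod.mk_add_mk]
  push_cast
  ring_nf

theorem idxOf_singleton (t : TripleIndex N) :
    idxOf i j k [t] l =
      ((if t.1 = {j, k, l.1} then 1 else 0) + (if t.1 = {i, j, l.1} then 1 else 0),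
        (if t.1 = {i, k, l.1} then 1 else 0) + (if t.1 = {i, j, l.1} then 1 else 0)) := by
  simp only [idxOf, cntA, List.countP_singleton, decide_eq_true_eq]
  split_ifs <;> norm_num

theorem idxOf_singleton_of_not_mem {t : TripleIndex N} (ht : l.1 ∉ t.1) :
    idxOf i j k [t] l = 0 := by
  have hcnt : ∀ y z, cntA [t] y z l = 0 := fun y z => by
    simp only [cntA, List.countP_singleton, decide_eq_true_eq, ite_eq_right_iff, one_ne_zero]
    intro h
    exact ht (h ▸ by simp)
  simp [idxOf, hcnt]

def letterPerm (t : TripleIndex N) : Perm (𝕍 × (𝕍 → ZMod 2)) :=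
  if t.1 = {i, j, k} then toggle else move (idxOf i j k [t] l)

theorem letterPerm_inv (t : TripleIndex N) : (letterPerm l t)⁻¹ = letterPerm l t := by
  unfold letterPerm
  split_ifs <;> exact Involutive.toPerm_symm _

theorem letterPerm_inv_apply (pre : List (TripleIndex N)) (t : TripleIndex N)
    (a : 𝕍 → ZMod 2) :
    (letterPerm l t)⁻¹ (idxOf i j k pre l, a) =
      (idxOf i j k (pre ++ [t]) l, a + toAdd (indexTally l
        (if t.1 = {i, j, k} then PresentedGroup.of (idxOf i j k pre) else 1))) := by
  rw [letterPerm_inv, letterPerm, idxOf_append_apply]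
  split_ifs with ht
  · have hl : l.1 ∉ t.1 := by simp [ht, l.2.1, l.2.2.1, l.2.2.2]
    simp [indexTally_of, idxOf_singleton_of_not_mem l hl]
  · simp

-- Permutations compose from the right, so the inverse of a product reads the word from the left.
theorem inv_prod_letterPerm_apply (L pre : List (TripleIndex N)) (a : 𝕍 → ZMod 2) :
    ((L.map (letterPerm l)).prod)⁻¹ (idxOf i j k pre l, a) =
      (idxOf i j k (pre ++ L) l, a + toAdd (indexTally l (wRec i j k pre L))) := by
  induction L generalizing pre a with
  | nil => simp [wRec]
  | cons t L ih =>
    rw [List.map_cons, List.prod_cons, mul_inv_rev, Perm.mul_apply, letterPerm_inv_apply, ih,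
      wRec, map_mul, toAdd_mul, add_assoc, List.append_assoc, List.singleton_append]

theorem toAdd_indexTally_wWord (L : List (TripleIndex N)) :
    toAdd (indexTally l (wWord i j k L)) = ((L.map (letterPerm l)).prod⁻¹ (0, 0)).2 := by
  have h := inv_prod_letterPerm_apply l L [] 0
  rw [idxOf_nil_apply] at h
  simp [h, wWord]

end Tally

section LastCoordinate
variable {n : ℕ} (i j k : Fin n)
open Lamplighter Multiplicative

def lastCoord : {x : Fin (n + 1) // x ≠ i.castSucc ∧ x ≠ j.castSucc ∧ x ≠ k.castSucc} :=
  ⟨Fin.last n, (Fin.castSucc_lt_last i).ne', (Fin.castSucc_lt_last j).ne',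
    (Fin.castSucc_lt_last k).ne'⟩

def lampA : TripleIndex n → Perm (𝕍 × (𝕍 → ZMod 2)) :=
  letterPerm (lastCoord i j k) ∘ castTriple

def lampS : SGen n → Perm (𝕍 × (𝕍 → ZMod 2)) :=
  letterPerm (lastCoord i j k) ∘ sigTriple

theorem toAdd_indexTally_w_pi_tphiGen (π : TGn3 n →* Gn3 (n + 1))
    (hπ : ∀ g : TGen n, π (PresentedGroup.of g) = piGen g)
    (w : Gn3 (n + 1) →* Fn3 (n + 1) i.castSucc j.castSucc k.castSucc)
    (hw : ∀ L : List (TripleIndex (n + 1)),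
      w (gn3Word L) = wWord i.castSucc j.castSucc k.castSucc L) (p : PBGen n) :
    toAdd (indexTally (lastCoord i j k) (w (π (tphiGen p)))) =
      ((tphiWord (lampA i j k) (lampS i j k) p.1.1 p.1.2)⁻¹ (0, 0)).2 := by
  rw [pi_tphiGen_eq_gn3Word π hπ, hw, toAdd_indexTally_wWord,
    ← FreeGroup.lift_eq_prod_map_fst_toWord (letterPerm_inv _), piTphiFreeWord, map_tphiWord]
  rfl

theorem lampA_apply (u : TripleIndex n) :
    lampA i j k u = if u.1 = {i, j, k} then toggle else 1 := by
  have hmap : ({i.castSucc, j.castSucc, k.castSucc} : Finset (Fin (n + 1))) =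
      Finset.map Fin.castSuccEmb {i, j, k} := by simp [Finset.map_insert]
  have hlast : (lastCoord i j k).1 ∉ (castTriple u).1 := by simp [castTriple, lastCoord]
  rw [lampA, comp_apply, letterPerm, idxOf_singleton_of_not_mem _ hlast, move_zero, hmap]
  exact if_congr (Finset.map_inj (f := Fin.castSuccEmb)) rfl rfl

theorem sigTriple_eq_iff {a b : Fin n} (hab : a ≠ b) (x y : Fin n) :
    (sigTriple ⟨(a, b), hab⟩).1 = {x.castSucc, y.castSucc, Fin.last n} ↔
      ({a, b} : Finset (Fin n)) = {x, y} := by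
  constructor
  · intro h
    ext z
    simpa [sigTriple] using congrArg (z.castSucc ∈ ·) h
  · intro h
    ext z
    induction z using Fin.lastCases with
    | last => simp [sigTriple]
    | cast z => simpa [sigTriple] using congrArg (z ∈ ·) h

theorem sgen_lampS {a b : Fin n} (hab : a ≠ b) :
    sgen (lampS i j k) a b =
      move ((if ({a, b} : Finset (Fin n)) = {j, k} then 1 else 0) +
          (if ({a, b} : Finset (Fin n)) = {i, j} then 1 else 0),
        (if ({a, b} : Finset (Fin n)) = {i, k} then 1 else 0) +
          (if ({a, b} : Finset (Fin n)) = {i, j} then 1 else 0)) := by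
  have hne : (sigTriple ⟨(a, b), hab⟩).1 ≠ {i.castSucc, j.castSucc, k.castSucc} :=
    ne_of_mem_of_not_mem' (a := Fin.last n) (by simp [sigTriple]) (by simp [Fin.ext_iff]; omega)
  rw [sgen, dif_pos hab, lampS, comp_apply, letterPerm, if_neg hne, idxOf_singleton]
  simp only [lastCoord, sigTriple_eq_iff]

theorem sgen_lampS_comm (a b : Fin n) : sgen (lampS i j k) a b = sgen (lampS i j k) b a := by
  rcases eq_or_ne a b with rfl | hab
  · rfl
  · rw [sgen_lampS i j k hab, sgen_lampS i j k hab.symm, Finset.pair_comm]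

theorem sgen_lampS_of_not_mem (a : Fin n) {b : Fin n} (hb : b ≠ i ∧ b ≠ j ∧ b ≠ k) :
    sgen (lampS i j k) a b = 1 := by
  rcases eq_or_ne a b with rfl | hab
  · simp [sgen]
  · have hne : ∀ x y : Fin n, b ∉ ({x, y} : Finset (Fin n)) →
        ({a, b} : Finset (Fin n)) ≠ {x, y} := fun x y => ne_of_mem_of_not_mem' (by simp)
    rw [sgen_lampS i j k hab, if_neg (hne _ _ (by simp [hb.2.1, hb.2.2])),
      if_neg (hne _ _ (by simp [hb.1, hb.2.1])), if_neg (hne _ _ (by simp [hb.1, hb.2.2]))]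
    exact move_zero

theorem cMid_lampA_of_not_mem (s : Perm (𝕍 × (𝕍 → ZMod 2))) (a : Fin n) {m : Fin n}
    (hm : m ≠ i ∧ m ≠ j ∧ m ≠ k) : cMid (lampA i j k) s a m = s := by
  have h : ∀ l, atri (lampA i j k) a m l = 1 := fun l => by
    have hne : ({a, m, l} : Finset (Fin n)) ≠ {i, j, k} :=
      ne_of_mem_of_not_mem' (a := m) (by simp) (by simp [hm.1, hm.2.1, hm.2.2])
    unfold atri
    split_ifs <;> simp [lampA_apply, hne]
  simp [cMid, listUp, listLow, h]

end LastCoordinate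

section Generators
variable {n : ℕ} {i j k : Fin n}
open Lamplighter

theorem sgen_lampS_ij (hij : i < j) (hjk : j < k) : sgen (lampS i j k) i j = move (1, 1) := by
  have h₁ : ({i, j} : Finset (Fin n)) ≠ {j, k} :=
    ne_of_mem_of_not_mem' (a := i) (by simp) (by simp [hij.ne, (hij.trans hjk).ne])
  have h₂ : ({i, j} : Finset (Fin n)) ≠ {i, k} :=
    ne_of_mem_of_not_mem' (a := j) (by simp) (by simp [hij.ne', hjk.ne])
  simp [sgen_lampS i j k hij.ne, h₁, h₂]

theorem sgen_lampS_jk (hij : i < j) (hjk : j < k) : sgen (lampS i j k) j k = move (1, 0) := by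
  have h₁ : ({j, k} : Finset (Fin n)) ≠ {i, j} :=
    ne_of_mem_of_not_mem' (a := k) (by simp) (by simp [(hij.trans hjk).ne', hjk.ne'])
  have h₂ : ({j, k} : Finset (Fin n)) ≠ {i, k} :=
    ne_of_mem_of_not_mem' (a := j) (by simp) (by simp [hij.ne', hjk.ne])
  simp [sgen_lampS i j k hjk.ne, h₁, h₂]

theorem sgen_lampS_ik (hij : i < j) (hjk : j < k) : sgen (lampS i j k) i k = move (0, 1) := by
  have h₁ : ({i, k} : Finset (Fin n)) ≠ {j, k} :=
    ne_of_mem_of_not_mem' (a := i) (by simp) (by simp [hij.ne, (hij.trans hjk).ne])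
  have h₂ : ({i, k} : Finset (Fin n)) ≠ {i, j} :=
    ne_of_mem_of_not_mem' (a := k) (by simp) (by simp [(hij.trans hjk).ne', hjk.ne'])
  simp [sgen_lampS i j k (hij.trans hjk).ne, h₁, h₂]

theorem cMid_lampA_of_eq (hij : i < j) (hjk : j < k) (s : Perm (𝕍 × (𝕍 → ZMod 2)))
    {a m c : Fin n} (hc : ({a, m, c} : Finset (Fin n)) = {i, j, k}) (hca : c ≠ a) (hcm : c ≠ m) :
    cMid (lampA i j k) s a m =
      (if m < c then toggle else 1) * s * (if c < m then toggle else 1) := by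
  have hcard : ({a, m, c} : Finset (Fin n)).card = 3 := hc ▸
    Finset.card_eq_three.mpr ⟨i, j, k, hij.ne, (hij.trans hjk).ne, hjk.ne, rfl⟩
  have h : ∀ l, l ≠ c → atri (lampA i j k) a m l = 1 := fun l hl => by
    have hne : ({a, m, l} : Finset (Fin n)) ≠ {i, j, k} := fun h => by
      have : c ∈ ({a, m, l} : Finset (Fin n)) := h ▸ hc ▸ by simp
      simp [hca, hcm, hl.symm] at this
    unfold atri
    split_ifs <;> simp [lampA_apply, hne]
  rw [cMid, listUp_eq_of_ne_one _ m c fun l _ => h l, listLow_eq_of_ne_one _ m c fun l _ => h l,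
    atri, dif_pos hcard, lampA_apply, if_pos hc]

theorem tphiWord_lamp_ij (hij : i < j) (hjk : j < k) :
    tphiWord (lampA i j k) (lampS i j k) i j = (toggle * move (1, 1)) ^ 2 := by
  have hpre : ∀ m, decide (i < m ∧ m < j) = true →
      (cMid (lampA i j k) (sgen (lampS i j k) i m)⁻¹ i m)⁻¹ = 1 := fun m hm => by
    simp only [decide_eq_true_eq] at hm
    have hm' : m ≠ i ∧ m ≠ j ∧ m ≠ k := ⟨hm.1.ne', hm.2.ne, (hm.2.trans hjk).ne⟩
    rw [sgen_lampS_of_not_mem i j k i hm', inv_one, cMid_lampA_of_not_mem i j k _ i hm', inv_one]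
  rw [tphiWord, prod_map_filter_finRange_eq_one _ _ hpre,
    cMid_lampA_of_eq hij hjk _ rfl (hij.trans hjk).ne' hjk.ne',
    cMid_lampA_of_eq hij hjk _ rfl (hij.trans hjk).ne' hjk.ne',
    sgen_lampS_comm i j k j i, sgen_lampS_ij hij hjk, if_pos hjk, if_neg hjk.not_gt]
  simp [pow_two]

theorem tphiWord_lamp_jk (hij : i < j) (hjk : j < k) :
    tphiWord (lampA i j k) (lampS i j k) j k = (move (1, 0) * toggle) ^ 2 := by
  have hpre : ∀ m, decide (j < m ∧ m < k) = true →
      (cMid (lampA i j k) (sgen (lampS i j k) j m)⁻¹ j m)⁻¹ = 1 := fun m hm => by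
    simp only [decide_eq_true_eq] at hm
    have hm' : m ≠ i ∧ m ≠ j ∧ m ≠ k := ⟨(hij.trans hm.1).ne', hm.1.ne', hm.2.ne⟩
    rw [sgen_lampS_of_not_mem i j k j hm', inv_one, cMid_lampA_of_not_mem i j k _ j hm', inv_one]
  have hc : ({j, k, i} : Finset (Fin n)) = {i, j, k} := by
    ext; simp; tauto
  rw [tphiWord, prod_map_filter_finRange_eq_one _ _ hpre,
    cMid_lampA_of_eq hij hjk _ hc hij.ne (hij.trans hjk).ne,
    cMid_lampA_of_eq hij hjk _ hc hij.ne (hij.trans hjk).ne,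
    sgen_lampS_comm i j k k j, sgen_lampS_jk hij hjk,
    if_pos (hij.trans hjk), if_neg (hij.trans hjk).not_gt]
  simp [pow_two]

theorem tphiWord_lamp_ik (hij : i < j) (hjk : j < k) :
    tphiWord (lampA i j k) (lampS i j k) i k =
      (toggle * move (1, 1))⁻¹ * (move (0, 1) * toggle) ^ 2 * (toggle * move (1, 1)) := by
  have hpre : ∀ m, decide (i < m ∧ m < k) = true → m ≠ j →
      (cMid (lampA i j k) (sgen (lampS i j k) i m)⁻¹ i m)⁻¹ = 1 := fun m hm hmj => by
    simp only [decide_eq_true_eq] at hm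
    have hm' : m ≠ i ∧ m ≠ j ∧ m ≠ k := ⟨hm.1.ne', hmj, hm.2.ne⟩
    rw [sgen_lampS_of_not_mem i j k i hm', inv_one, cMid_lampA_of_not_mem i j k _ i hm', inv_one]
  have hc : ({i, k, j} : Finset (Fin n)) = {i, j, k} := by
    ext; simp; tauto
  rw [tphiWord, prod_map_filter_finRange_eq_of_ne_one _ _ j hpre,
    if_pos (decide_eq_true ⟨hij, hjk⟩),
    cMid_lampA_of_eq hij hjk _ rfl (hij.trans hjk).ne' hjk.ne',
    cMid_lampA_of_eq hij hjk _ hc hij.ne' hjk.ne, cMid_lampA_of_eq hij hjk _ hc hij.ne' hjk.ne,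
    sgen_lampS_comm i j k k i, sgen_lampS_ij hij hjk, sgen_lampS_ik hij hjk,
    if_pos hjk, if_neg hjk.not_gt, move_inv]
  simp [pow_two, mul_assoc]

end Generators

/-- For `i < j < k`, the three elements
`\widetilde{w}_{ijk}(\widetilde{φ}(b_{ij}))`, `\widetilde{w}_{ijk}(\widetilde{φ}(b_{ik}))`,
`\widetilde{w}_{ijk}(\widetilde{φ}(b_{jk}))` of `F_{n+1}^3` are pairwise distinct and none is
the identity. -/
theorem wtilde_phi_generators_distinct (n : ℕ) (i j k : Fin n) (hij : i < j) (hjk : j < k)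
    (π : TGn3 n →* Gn3 (n + 1)) (hπ : ∀ g : TGen n, π (PresentedGroup.of g) = piGen g)
    (w : Gn3 (n + 1) →* Fn3 (n + 1) i.castSucc j.castSucc k.castSucc)
    (hw : ∀ L : List (TripleIndex (n + 1)),
      w (gn3Word L) = wWord i.castSucc j.castSucc k.castSucc L) :
    w (π (tphiGen ⟨(i, j), hij⟩)) ≠ w (π (tphiGen ⟨(i, k), hij.trans hjk⟩)) ∧
    w (π (tphiGen ⟨(i, j), hij⟩)) ≠ w (π (tphiGen ⟨(j, k), hjk⟩)) ∧
    w (π (tphiGen ⟨(i, k), hij.trans hjk⟩)) ≠ w (π (tphiGen ⟨(j, k), hjk⟩)) ∧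
    w (π (tphiGen ⟨(i, j), hij⟩)) ≠ 1 ∧
    w (π (tphiGen ⟨(i, k), hij.trans hjk⟩)) ≠ 1 ∧
    w (π (tphiGen ⟨(j, k), hjk⟩)) ≠ 1 := by
  let tally x := Multiplicative.toAdd (indexTally (lastCoord i j k) x)
  have htally (p : PBGen n) : tally (w (π (tphiGen p))) =
      ((tphiWord (lampA i j k) (lampS i j k) p.1.1 p.1.2)⁻¹ (0, 0)).2 :=
    toAdd_indexTally_w_pi_tphiGen i j k π hπ w hw p
  have h₁ : tally (w (π (tphiGen ⟨(i, j), hij⟩))) = Pi.single 0 1 + Pi.single (1, 1) 1 := by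
    rw [htally, tphiWord_lamp_ij hij hjk]; decide
  have h₂ : tally (w (π (tphiGen ⟨(i, k), hij.trans hjk⟩))) =
      Pi.single (1, 0) 1 + Pi.single (1, 1) 1 := by
    rw [htally, tphiWord_lamp_ik hij hjk]; decide
  have h₃ : tally (w (π (tphiGen ⟨(j, k), hjk⟩))) = Pi.single 0 1 + Pi.single (1, 0) 1 := by
    rw [htally, tphiWord_lamp_jk hij hjk]; decide
  have h₀ : tally 1 = 0 := by simp [tally]
  refine ⟨?_, ?_, ?_, ?_, ?_, ?_⟩ <;> refine ne_of_apply_ne tally ?_ <;>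
    simp only [h₁, h₂, h₃, h₀] <;> decide
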